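/- Let A = B ⊕ V be a ℤ/2-graded K-algebra with even part B and odd part V. Suppose there exist odd elements φ₁, φ₂ ∈ V and a nonzero scalar c ∈ K such that φ₁φ₂ − φ₂φ₁ = c·1 in A. Then the multiplication-induced map μ : V ⊗_B V → B is injective: every element x ∈ V ⊗_B V with μ(x) = 0 satisfies x = 0. -/

import Mathlib

open scoped TensorProduct

instance grTensorV_subAddCommGroup (K A : Type) [Field K] [Ring A] [Algebra K A]
    (V : Submodule K A) : AddCommGroup V := Submodule.addCommGroup V

/-- The relative tensor product `V ⊗_B V` of the odd part `V` with itself over the even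
part `B`, realized as the quotient of `V ⊗_K V` by the `K`-span of the balancing relators
`(v·b) ⊗ v' - v ⊗ (b·v')` for `b ∈ B`. -/
noncomputable abbrev grTensorV (K A : Type) [Field K] [Ring A] [Algebra K A]
    (B V : Submodule K A) : Type :=
  (TensorProduct K V V) ⧸ (Submodule.span K {x : TensorProduct K V V |
    ∃ (v v' b : A) (hv : v ∈ V) (hv' : v' ∈ V) (_ : b ∈ B) (hvb : v * b ∈ V)
      (hbv' : b * v' ∈ V),
      x = (⟨v * b, hvb⟩ : V) ⊗ₜ[K] (⟨v', hv'⟩ : V)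
            - (⟨v, hv⟩ : V) ⊗ₜ[K] (⟨b * v', hbv'⟩ : V)})

/-!
If `φ₁φ₂ - φ₂φ₁ = c` with `c` a unit, then `b ↦ c⁻¹ ([bφ₁ ⊗ φ₂] - [bφ₂ ⊗ φ₁])` is a left
inverse of the multiplication map `μ`: balancing over `B` moves `v'φᵢ` across the tensor sign,
so `μ [v ⊗ v']` is sent to `c⁻¹ [v ⊗ v'(φ₁φ₂ - φ₂φ₁)] = [v ⊗ v']`.
-/

namespace grTensorV

variable {K A : Type} [Field K] [Ring A] [Algebra K A] {B V : Submodule K A}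

theorem mk_tmul_eq_mk_tmul {v w x y : V} {b : A} (hb : b ∈ B)
    (hw : (w : A) = v * b) (hx : (x : A) = b * y) :
    (Submodule.Quotient.mk (w ⊗ₜ[K] y) : grTensorV K A B V) =
      Submodule.Quotient.mk (v ⊗ₜ[K] x) := by
  obtain ⟨w, hwV⟩ := w
  obtain ⟨x, hxV⟩ := x
  subst hw hx
  rw [Submodule.Quotient.eq]
  exact Submodule.subset_span ⟨v, y, b, v.2, y.2, hb, hwV, hxV, rfl⟩

noncomputable def mul (hVV : ∀ v ∈ V, ∀ v' ∈ V, v * v' ∈ B) : grTensorV K A B V →ₗ[K] B :=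
  Submodule.liftQ _
    (TensorProduct.lift <| LinearMap.mk₂ K (fun v v' : V => (⟨v * v', hVV _ v.2 _ v'.2⟩ : B))
      (fun _ _ _ => Subtype.ext (add_mul _ _ _))
      (fun _ _ _ => Subtype.ext (smul_mul_assoc _ _ _))
      (fun _ _ _ => Subtype.ext (mul_add _ _ _))
      (fun _ _ _ => Subtype.ext (mul_smul_comm _ _ _))) <| by
    rw [Submodule.span_le]
    rintro _ ⟨v, v', b, -, -, -, -, -, rfl⟩
    simpa [sub_eq_zero] using mul_assoc v b v'

theorem mul_mk_tmul (hVV : ∀ v ∈ V, ∀ v' ∈ V, v * v' ∈ B) (v w : V) :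
    mul hVV (Submodule.Quotient.mk (v ⊗ₜ[K] w)) = ⟨v * w, hVV _ v.2 _ w.2⟩ :=
  rfl

section Splitting

variable (hBV : ∀ b ∈ B, ∀ v ∈ V, b * v ∈ V) {φ ψ : A} (hφ : φ ∈ V) (hψ : ψ ∈ V)

/-- `b ↦ [bφ ⊗ ψ]`. -/
noncomputable def mulRightTmul : B →ₗ[K] grTensorV K A B V :=
  (Submodule.span K _).mkQ ∘ₗ (TensorProduct.mk K V V).flip ⟨ψ, hψ⟩ ∘ₗ
    (LinearMap.mulRight K φ).restrict fun b hb => hBV b hb φ hφ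

theorem mulRightTmul_mul_mk_tmul (hVV : ∀ v ∈ V, ∀ v' ∈ V, v * v' ∈ B) (v v' : V) :
    mulRightTmul hBV hφ hψ (mul hVV (Submodule.Quotient.mk (v ⊗ₜ[K] v'))) =
      Submodule.Quotient.mk
        (v ⊗ₜ[K] ⟨v' * φ * ψ, hBV _ (hVV _ v'.2 _ hφ) _ hψ⟩) :=
  mk_tmul_eq_mk_tmul (hVV _ v'.2 _ hφ) (mul_assoc _ _ _) rfl

variable {φ₁ φ₂ : A} (hφ₁ : φ₁ ∈ V) (hφ₂ : φ₂ ∈ V)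

noncomputable def commSplitting (c : K) : B →ₗ[K] grTensorV K A B V :=
  c⁻¹ • (mulRightTmul hBV hφ₁ hφ₂ - mulRightTmul hBV hφ₂ hφ₁)

theorem commSplitting_leftInverse_mul (hVV : ∀ v ∈ V, ∀ v' ∈ V, v * v' ∈ B) {c : K}
    (hc : c ≠ 0) (hcomm : φ₁ * φ₂ - φ₂ * φ₁ = algebraMap K A c) :
    Function.LeftInverse (commSplitting hBV hφ₁ hφ₂ c) (mul hVV) := by
  intro x
  obtain ⟨x, rfl⟩ := Submodule.Quotient.mk_surjective _ x
  induction x using TensorProduct.induction_on with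
  | zero => simp
  | add x y hx hy => rw [Submodule.Quotient.mk_add, map_add, map_add, hx, hy]
  | tmul v v' =>
    have hcommutator : (⟨v' * φ₁ * φ₂, hBV _ (hVV _ v'.2 _ hφ₁) _ hφ₂⟩ -
        ⟨v' * φ₂ * φ₁, hBV _ (hVV _ v'.2 _ hφ₂) _ hφ₁⟩ : V) = c • v' :=
      Subtype.ext <| by
        simp only [Submodule.coe_sub, Submodule.coe_smul, mul_assoc, ← mul_sub, hcomm,
          ← Algebra.commutes, Algebra.smul_def]
    simp only [commSplitting, LinearMap.smul_apply, LinearMap.sub_apply,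
      mulRightTmul_mul_mk_tmul, ← Submodule.Quotient.mk_sub, ← TensorProduct.tmul_sub,
      hcommutator, TensorProduct.tmul_smul, Submodule.Quotient.mk_smul, smul_smul,
      inv_mul_cancel₀ hc, one_smul]

end Splitting

end grTensorV

theorem stmt_11_general (K A : Type) [Field K] [Ring A] [Algebra K A]
    (B V : Submodule K A) (hBV : ∀ b ∈ B, ∀ v ∈ V, b * v ∈ V)
    (hVV : ∀ v ∈ V, ∀ v' ∈ V, v * v' ∈ B)
    (φ₁ φ₂ : A) (hφ₁ : φ₁ ∈ V) (hφ₂ : φ₂ ∈ V) (c : K) (hc : c ≠ 0)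
    (hcomm : φ₁ * φ₂ - φ₂ * φ₁ = algebraMap K A c) :
    ∃ μ : grTensorV K A B V →ₗ[K] B,
      (∀ (v v' : A) (hv : v ∈ V) (hv' : v' ∈ V) (h : v * v' ∈ B),
        μ (Submodule.Quotient.mk ((⟨v, hv⟩ : V) ⊗ₜ[K] (⟨v', hv'⟩ : V))) = ⟨v * v', h⟩) ∧
      Function.Injective μ ∧ (∀ x : grTensorV K A B V, μ x = 0 → x = 0) := by
  have hinj : Function.Injective (grTensorV.mul hVV) :=
    (grTensorV.commSplitting_leftInverse_mul hBV hφ₁ hφ₂ hVV hc hcomm).injective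
  exact ⟨grTensorV.mul hVV,
    fun v v' hv hv' _ => grTensorV.mul_mk_tmul hVV ⟨v, hv⟩ ⟨v', hv'⟩, hinj,
    fun _ => (injective_iff_map_eq_zero _).1 hinj _⟩

/-- For a `ℤ/2`-graded `K`-algebra `A = B ⊕ V` containing odd elements
`φ₁, φ₂ ∈ V` with `φ₁φ₂ - φ₂φ₁ = c·1` for a nonzero scalar `c`, the multiplication-induced
map `μ : V ⊗_B V → B` is injective: every `x` with `μ(x) = 0` satisfies `x = 0`. -/
theorem stmt_11 (K A : Type) [Field K] [CharZero K] [Ring A] [Algebra K A]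
    (B V : Submodule K A) (hcompl : IsCompl B V) (hone : (1 : A) ∈ B)
    (hBB : ∀ b ∈ B, ∀ b' ∈ B, b * b' ∈ B) (hBV : ∀ b ∈ B, ∀ v ∈ V, b * v ∈ V)
    (hVB : ∀ v ∈ V, ∀ b ∈ B, v * b ∈ V) (hVV : ∀ v ∈ V, ∀ v' ∈ V, v * v' ∈ B)
    (φ₁ φ₂ : A) (hφ₁ : φ₁ ∈ V) (hφ₂ : φ₂ ∈ V) (c : K) (hc : c ≠ 0)
    (hcomm : φ₁ * φ₂ - φ₂ * φ₁ = algebraMap K A c) :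
    ∃ μ : grTensorV K A B V →ₗ[K] B,
      (∀ (v v' : A) (hv : v ∈ V) (hv' : v' ∈ V) (h : v * v' ∈ B),
        μ (Submodule.Quotient.mk ((⟨v, hv⟩ : V) ⊗ₜ[K] (⟨v', hv'⟩ : V))) = ⟨v * v', h⟩) ∧
      Function.Injective μ ∧ (∀ x : grTensorV K A B V, μ x = 0 → x = 0) :=
  stmt_11_general K A B V hBV hVV φ₁ φ₂ hφ₁ hφ₂ c hc hcomm
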